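/- arXiv:1705.03589 — 3 statements merged into one kernel-verified Lean document; each statement's English description precedes it below -/
import Mathlib

section
/- Let V be a finite set of size n and μ a probability measure on A^V with A finite. If X_1,...,X_n are i.i.d. uniform random variables on [0,1] indexed by an enumeration v_1,...,v_n of V, then (1/n)·H(μ) = (1/n)·Σ_{i=1}^n E[H_μ(σ_{v_i} | {σ_{v_j} : X_j < X_i})], where the expectation is over the random variables X_1,...,X_n. -/
open scoped Classical BigOperators

noncomputable section

/-- Shannon entropy of a finitely supported probability vector (natural log,
with the convention `0 · log 0 = 0`, automatic since `Real.log 0 = 0`). -/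
def shEnt {Ω : Type*} [Fintype Ω] (p : Ω → ℝ) : ℝ :=
  -∑ ω, p ω * Real.log (p ω)

/-- Marginal of a probability vector on `V → A` on the coordinates in `S`. -/
def marg {V A : Type*} [Fintype V] [Fintype A] (μ : (V → A) → ℝ) (S : Finset V) :
    ({x // x ∈ S} → A) → ℝ :=
  fun η => ∑ x : V → A, if (∀ i : S, x i = η i) then μ x else 0

/-- Conditional Shannon entropy `H_μ(σ_v | σ_S)`, via the chain rule
`H(σ_{S ∪ {v}}) - H(σ_S)`. -/
def condEnt {V A : Type*} [Fintype V] [Fintype A] (μ : (V → A) → ℝ) (v : V)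
    (S : Finset V) : ℝ :=
  shEnt (marg μ (insert v S)) - shEnt (marg μ S)


open MeasureTheory

/-!
Once `X` is injective, listing the coordinates in increasing order of `X` turns the sum of
conditional entropies into the telescoping sum `H(σ_V) - H(σ_∅) = H(μ)`, i.e. the ordinary chain
rule along that order. Ties `X i = X j` lie on proper hyperplanes, which are Lebesgue-null, so the
integrand's sum is almost everywhere the constant `H(μ)`.
-/

open Finset Function

theorem Finset.sum_insert_filter_lt_sub_eq_sub {ι α β : Type*} [DecidableEq ι] [LinearOrder α]
    [AddCommGroup β] (X : ι → α) (G : Finset ι → β) (s : Finset ι) (hX : Set.InjOn X s) :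
    ∑ i ∈ s, (G (insert i (s.filter fun j => X j < X i)) - G (s.filter fun j => X j < X i)) =
      G s - G ∅ := by
  induction s using Finset.induction_on_max_value X with
  | empty => simp
  | insert a s ha hmax ih =>
    have hlt : ∀ x ∈ s, X x < X a := fun x hx =>
      (hmax x hx).lt_of_ne fun h => ne_of_mem_of_not_mem hx ha (hX (by simp [hx]) (by simp) h)
    have below_a : (insert a s).filter (fun j => X j < X a) = s := by
      ext j; simp only [mem_filter, mem_insert]
      exact ⟨fun ⟨h, hj⟩ => h.resolve_left (by rintro rfl; exact lt_irrefl _ hj),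
        fun hj => ⟨Or.inr hj, hlt j hj⟩⟩
    have below_i : ∀ i ∈ s,
        (insert a s).filter (fun j => X j < X i) = s.filter fun j => X j < X i := fun i hi => by
      rw [filter_insert, if_neg (hmax i hi).not_gt]
    rw [sum_insert ha, below_a, sum_congr rfl fun i hi => by rw [below_i i hi],
      ih (hX.mono (by simp))]
    abel

section Entropy

variable {V A : Type*} [Fintype V] [Fintype A]

theorem shEnt_marg_univ (μ : (V → A) → ℝ) : shEnt (marg μ univ) = shEnt μ := by
  let E : (V → A) ≃ ({v // v ∈ (univ : Finset V)} → A) :=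
    Equiv.arrowCongr (Equiv.subtypeUnivEquiv mem_univ).symm (Equiv.refl A)
  have marg_E : ∀ x, marg μ univ (E x) = μ x := fun x => by
    rw [marg, sum_eq_single x
      (fun y _ hy => if_neg fun h => hy (funext fun v => h ⟨v, mem_univ v⟩)) (by simp)]
    simp [E]
  simp only [shEnt, ← E.sum_comp, marg_E]

theorem shEnt_marg_empty {μ : (V → A) → ℝ} (hμ : ∑ x, μ x = 1) :
    shEnt (marg μ (∅ : Finset V)) = 0 := by
  have : ∀ η, marg μ (∅ : Finset V) η = 1 := fun η => by simp [marg, hμ]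
  simp [shEnt, this]

theorem sum_condEnt_filter_lt {ι α : Type*} [Fintype ι] [DecidableEq ι] [LinearOrder α]
    (e : ι ≃ V) {μ : (V → A) → ℝ} (hμ : ∑ x, μ x = 1) {X : ι → α} (hX : Injective X) :
    ∑ i, condEnt μ (e i) ((univ.filter fun j => X j < X i).image e) = shEnt μ := by
  have key := sum_insert_filter_lt_sub_eq_sub X (fun T => shEnt (marg μ (T.image e))) univ hX.injOn
  rw [image_univ_equiv, image_empty, shEnt_marg_univ, shEnt_marg_empty hμ, sub_zero] at key
  rw [← key]
  exact sum_congr rfl fun i _ => by rw [condEnt, image_insert]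

end Entropy

theorem ae_injective_volume_pi (ι : Type*) [Fintype ι] :
    ∀ᵐ X ∂(volume : Measure (ι → ℝ)), Injective X := by
  have coord_ne : ∀ i j : ι, i ≠ j → ∀ᵐ X ∂(volume : Measure (ι → ℝ)), X i ≠ X j :=
    fun i j hij => by
      let K := LinearMap.ker (LinearMap.proj (R := ℝ) (φ := fun _ : ι => ℝ) i - LinearMap.proj j)
      have hK : K ≠ ⊤ := fun h => by
        have := h ▸ Submodule.mem_top (x := Pi.single i 1)
        simp [K, hij.symm] at this
      refine ae_iff.2 ?_
      convert Measure.addHaar_submodule volume K hK using 2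
      ext X
      simp [K, sub_eq_zero]
  filter_upwards [ae_all_iff.2 fun i => ae_all_iff.2 fun j => ae_all_iff.2 (coord_ne i j)]
    with X hX i j
  exact not_imp_not.1 (hX i j)

theorem ae_injective_pi_restrict {ι : Type*} [Fintype ι] (s : Set ℝ) :
    ∀ᵐ X ∂(Measure.pi fun _ : ι => volume.restrict s), Injective X := by
  rw [← Measure.restrict_pi_pi]
  exact ae_restrict_of_ae (ae_injective_volume_pi ι)

theorem integrable_comp_filter_lt {ι : Type*} [Fintype ι] {μ : Measure (ι → ℝ)}
    [IsFiniteMeasure μ] (i : ι) (g : Finset ι → ℝ) :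
    Integrable (fun X : ι → ℝ => g (univ.filter fun j => X j < X i)) μ := by
  have hφ : Measurable fun (X : ι → ℝ) (j : ι) => X j < X i := measurable_pi_lambda _ fun j =>
    measurableSet_setOfPred.1 (measurableSet_lt (measurable_pi_apply j) (measurable_pi_apply i))
  exact Integrable.comp_measurable (g := fun p : ι → Prop => g (univ.filter p)) .of_finite hφ

instance isProbabilityMeasure_restrict_Icc_zero_one :
    IsProbabilityMeasure (volume.restrict (Set.Icc (0 : ℝ) 1)) :=
  ⟨by simp⟩

theorem random_order_chain_rule_general {A V : Type*} [Fintype A] [Fintype V]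
    {n : ℕ} (e : Fin n ≃ V) (μ : (V → A) → ℝ)
    (hsum : ∑ x, μ x = 1) :
    (1 / (n : ℝ)) * shEnt μ =
      (1 / (n : ℝ)) * ∑ i : Fin n,
        ∫ X : Fin n → ℝ,
          condEnt μ (e i) ((Finset.univ.filter (fun j : Fin n => X j < X i)).image e)
          ∂(Measure.pi fun _ : Fin n => volume.restrict (Set.Icc (0:ℝ) 1)) := by
  rw [← integral_finsetSum _ fun i _ =>
      integrable_comp_filter_lt i fun T => condEnt μ (e i) (T.image e),
    integral_congr_ae ((ae_injective_pi_restrict _).mono fun X hX =>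
      sum_condEnt_filter_lt e hsum hX),
    integral_const]
  simp

/-- random-order chain rule.  If `X_1, …, X_n` are i.i.d. uniform
on `[0,1]`, then `(1/n)·H(μ) = (1/n)·Σ_i E[H_μ(σ_{v_i} | {σ_{v_j} : X_j < X_i})]`. -/
theorem random_order_chain_rule {A V : Type*} [Fintype A] [Nonempty A] [Fintype V]
    {n : ℕ} (hn : 0 < n) (e : Fin n ≃ V) (μ : (V → A) → ℝ)
    (hpos : ∀ x, 0 ≤ μ x) (hsum : ∑ x, μ x = 1) :
    (1 / (n : ℝ)) * shEnt μ =
      (1 / (n : ℝ)) * ∑ i : Fin n,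
        ∫ X : Fin n → ℝ,
          condEnt μ (e i) ((Finset.univ.filter (fun j : Fin n => X j < X i)).image e)
          ∂(Measure.pi fun _ : Fin n => volume.restrict (Set.Icc (0:ℝ) 1)) :=
  random_order_chain_rule_general e μ hsum
end
end

section
/- Let μ be a probability measure on A^V with A, V finite, let v ∈ V, B ⊆ V with v ∈ B, S ⊆ V \ {v}, S_1 = S ∩ B, and fix a ∈ A and η ∈ A^V with μ(σ_S = η_S) > 0. Suppose that for all pairs of configurations τ, τ' on B^c with positive conditional probability given σ_{S_1} = η_{S_1}, we have |μ(σ_v = a | σ_{S_1} = η_{S_1}, σ_{B^c} = τ) − μ(σ_v = a | σ_{S_1} = η_{S_1}, σ_{B^c} = τ')| ≤ ε. Then |μ(σ_v = a | σ_S = η_S) − μ(σ_v = a | σ_{S_1} = η_{S_1})| ≤ ε. -/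
open scoped Classical BigOperators

noncomputable section

/-- Probability of an event under a probability vector on `V → A`. -/
def prEv {V A : Type*} [Fintype V] [Fintype A] (μ : (V → A) → ℝ)
    (E : Set (V → A)) : ℝ :=
  ∑ x ∈ Finset.univ.filter (fun x => x ∈ E), μ x

/-- Elementary conditional probability `μ(E | F)` (junk value `0` if
`μ(F) = 0`). -/
def cprEv {V A : Type*} [Fintype V] [Fintype A] (μ : (V → A) → ℝ)
    (E F : Set (V → A)) : ℝ :=
  prEv μ (E ∩ F) / prEv μ F

/-!
Split configurations into cells according to their values off `B`. By the law of total
probability over these cells, both `μ(σ_v = a | σ_S = η_S)` and `μ(σ_v = a | σ_{S₁} = η_{S₁})`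
are weighted averages of the cell probabilities `μ(σ_v = a | σ_{S₁} = η_{S₁}, σ_{Bᶜ} = τ)`:
on a cell compatible with `η` on `S \ B`, conditioning on `σ_S = η_S` is the same as conditioning
on `σ_{S₁} = η_{S₁}`. Two weighted averages of values that pairwise differ by at most `ε` differ by
at most `ε`.
-/

namespace Finset

section

variable {ι R α : Type*} [Field R] [LinearOrder R] [AddCommGroup α] [LinearOrder α]
  [IsOrderedAddMonoid α] [Module R α] [PosSMulMono R α] {s : Finset ι} {w : ι → R}
  {f : ι → α} {c : α}

theorem centerMass_le_of_forall_pos_le (hw₀ : ∀ i ∈ s, 0 ≤ w i) (hw₁ : 0 < ∑ i ∈ s, w i)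
    (h : ∀ i ∈ s, 0 < w i → f i ≤ c) : s.centerMass w f ≤ c := by
  rw [centerMass, inv_smul_le_iff_of_pos hw₁, sum_smul]
  refine sum_le_sum fun i hi => ?_
  rcases (hw₀ i hi).eq_or_lt with hwi | hwi
  · simp [← hwi]
  · exact smul_le_smul_of_nonneg_left (h i hi hwi) hwi.le

theorem le_centerMass_of_forall_pos_le (hw₀ : ∀ i ∈ s, 0 ≤ w i) (hw₁ : 0 < ∑ i ∈ s, w i)
    (h : ∀ i ∈ s, 0 < w i → c ≤ f i) : c ≤ s.centerMass w f := by
  have hneg : s.centerMass w (-f) = -s.centerMass w f := by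
    simp only [centerMass, Pi.neg_apply, smul_neg, sum_neg_distrib]
  rw [← neg_le_neg_iff, ← hneg]
  exact centerMass_le_of_forall_pos_le hw₀ hw₁ fun i hi hwi => neg_le_neg (h i hi hwi)

end

theorem abs_centerMass_sub_centerMass_le {ι R : Type*} [Field R] [LinearOrder R]
    [IsStrictOrderedRing R] {s t : Finset ι} {w w' f g : ι → R} {ε : R}
    (hw : ∀ i ∈ s, 0 ≤ w i) (hw' : ∀ j ∈ t, 0 ≤ w' j) (hs : 0 < ∑ i ∈ s, w i)
    (ht : 0 < ∑ j ∈ t, w' j) (h : ∀ i ∈ s, ∀ j ∈ t, 0 < w i → 0 < w' j → |f i - g j| ≤ ε) :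
    |s.centerMass w f - t.centerMass w' g| ≤ ε := by
  have hst : s.centerMass w f ≤ t.centerMass w' g + ε :=
    centerMass_le_of_forall_pos_le hw hs fun i hi hwi =>
      sub_le_iff_le_add.1 <| le_centerMass_of_forall_pos_le hw' ht
        fun j hj hwj => by linarith [(abs_sub_le_iff.1 (h i hi j hj hwi hwj)).1]
  have hts : t.centerMass w' g ≤ s.centerMass w f + ε :=
    centerMass_le_of_forall_pos_le hw' ht fun j hj hwj =>
      sub_le_iff_le_add.1 <| le_centerMass_of_forall_pos_le hw hs
        fun i hi hwi => by linarith [(abs_sub_le_iff.1 (h i hi j hj hwi hwj)).2]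
  exact abs_sub_le_iff.2 ⟨by linarith, by linarith⟩

end Finset

theorem equivalence_forall_notMem_eq {ι α : Type*} (B : Finset ι) :
    Equivalence fun y x : ι → α => ∀ i ∉ B, y i = x i :=
  ⟨fun _ _ _ => rfl, fun h i hi => (h i hi).symm, fun h h' i hi => (h i hi).trans (h' i hi)⟩

theorem setOf_forall_mem_eq_inter_cell {ι α : Type*} {S B : Finset ι} {η x : ι → α}
    (hx : ∀ i ∈ S, x i = η i) :
    ({y | ∀ i ∈ S, y i = η i} ∩ {y | ∀ i ∉ B, y i = x i} : Set (ι → α)) =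
      {y | ∀ i ∈ S ∩ B, y i = η i} ∩ {y | ∀ i ∉ B, y i = x i} := by
  ext y
  refine ⟨fun ⟨hyS, hyx⟩ => ⟨fun i hi => hyS i (Finset.mem_inter.1 hi).1, hyx⟩,
    fun ⟨hyS, hyx⟩ => ⟨fun i hi => ?_, hyx⟩⟩
  by_cases hiB : i ∈ B
  · exact hyS i (Finset.mem_inter.2 ⟨hi, hiB⟩)
  · exact (hyx i hiB).trans (hx i hi)

section

variable {V A : Type*} [Fintype V] [Fintype A] {μ : (V → A) → ℝ}

theorem prEv_nonneg (hμ : ∀ x, 0 ≤ μ x) (E : Set (V → A)) : 0 ≤ prEv μ E :=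
  Finset.sum_nonneg fun x _ => hμ x

theorem prEv_mono (hμ : ∀ x, 0 ≤ μ x) {E F : Set (V → A)} (h : E ⊆ F) :
    prEv μ E ≤ prEv μ F :=
  Finset.sum_le_sum_of_subset_of_nonneg (Finset.monotone_filter_right _ fun _ _ hx => h hx)
    fun x _ _ => hμ x

theorem le_prEv_of_mem (hμ : ∀ x, 0 ≤ μ x) {E : Set (V → A)} {x : V → A} (hx : x ∈ E) :
    μ x ≤ prEv μ E :=
  Finset.single_le_sum (fun y _ => hμ y) (by simpa using hx)

theorem prEv_eq_sum_indicator (E : Set (V → A)) : prEv μ E = ∑ x, E.indicator μ x := by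
  rw [prEv, Finset.sum_filter]
  rfl

theorem prEv_inter_eq_sum_mul_cprEv (hμ : ∀ x, 0 ≤ μ x) {R : (V → A) → (V → A) → Prop}
    (hR : Equivalence R) (E G : Set (V → A)) :
    prEv μ (E ∩ G) = ∑ x, G.indicator μ x * cprEv μ E (G ∩ {y | R y x}) := by
  have hcell : ∀ x y, R x y → {z | R z x} = {z | R z y} := fun x y hxy =>
    Set.ext fun z => ⟨fun hzx => hR.trans hzx hxy, fun hzy => hR.trans hzy (hR.symm hxy)⟩
  have hweight : ∀ y, (E ∩ G).indicator μ y *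
      ((∑ x, (G ∩ {z | R z y}).indicator μ x) / prEv μ (G ∩ {z | R z y})) =
      (E ∩ G).indicator μ y := by
    intro y
    rw [← prEv_eq_sum_indicator]
    -- the junk value of `cprEv` on a null cell is harmless: its points have mass `0`
    by_cases hy : y ∈ E ∩ G
    · rcases (prEv_nonneg hμ (G ∩ {z | R z y})).eq_or_lt with h0 | h0
      · have hy0 : μ y = 0 := le_antisymm (h0 ▸ le_prEv_of_mem hμ ⟨hy.2, hR.refl y⟩) (hμ y)
        simp [Set.indicator_of_mem hy, hy0]
      · rw [div_self h0.ne', mul_one]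
    · simp [Set.indicator_of_notMem hy]
  have hterm : ∀ x y, G.indicator μ x * (E ∩ (G ∩ {z | R z x})).indicator μ y /
      prEv μ (G ∩ {z | R z x}) =
      (E ∩ G).indicator μ y * ((G ∩ {z | R z y}).indicator μ x / prEv μ (G ∩ {z | R z y})) := by
    intro x y
    by_cases hyx : R y x
    · rw [hcell x y (hR.symm hyx)]
      simp only [Set.indicator_apply, Set.mem_inter_iff, Set.mem_ofPred_eq, hR.refl y,
        hR.symm hyx, and_true]
      split_ifs <;> ring
    · have hxy : ¬ R x y := fun h => hyx (hR.symm h)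
      simp [Set.indicator_apply, hyx, hxy]
  calc prEv μ (E ∩ G) = ∑ y, (E ∩ G).indicator μ y := prEv_eq_sum_indicator _
    _ = ∑ y, ∑ x, (E ∩ G).indicator μ y *
          ((G ∩ {z | R z y}).indicator μ x / prEv μ (G ∩ {z | R z y})) := by
      refine Finset.sum_congr rfl fun y _ => ?_
      rw [← Finset.mul_sum, ← Finset.sum_div, hweight]
    _ = _ := by
      rw [Finset.sum_comm]
      refine Finset.sum_congr rfl fun x _ => ?_
      simp only [← hterm, cprEv, prEv_eq_sum_indicator (E ∩ _), Finset.mul_sum, Finset.sum_div,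
        mul_div_assoc]

theorem cprEv_eq_centerMass (hμ : ∀ x, 0 ≤ μ x) {R : (V → A) → (V → A) → Prop}
    (hR : Equivalence R) (E G : Set (V → A)) :
    cprEv μ E G =
      Finset.univ.centerMass (G.indicator μ) fun x => cprEv μ E (G ∩ {y | R y x}) := by
  rw [Finset.centerMass, cprEv, prEv_inter_eq_sum_mul_cprEv hμ hR, prEv_eq_sum_indicator G,
    div_eq_inv_mul]
  rfl

end

theorem conditioning_localization_general {A V : Type*} [Fintype A]
    [Fintype V] (μ : (V → A) → ℝ) (hpos : ∀ x, 0 ≤ μ x)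
    (v : V) (B : Finset V) (S : Finset V)
    (a : A) (η : V → A) (ε : ℝ)
    (hS : 0 < prEv μ {x | ∀ i ∈ S, x i = η i})
    (hyp : ∀ τ τ' : V → A,
      0 < cprEv μ {x | ∀ i ∉ B, x i = τ i} {x | ∀ i ∈ S ∩ B, x i = η i} →
      0 < cprEv μ {x | ∀ i ∉ B, x i = τ' i} {x | ∀ i ∈ S ∩ B, x i = η i} →
      |cprEv μ {x | x v = a}
          ({x | ∀ i ∈ S ∩ B, x i = η i} ∩ {x | ∀ i ∉ B, x i = τ i}) -
        cprEv μ {x | x v = a}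
          ({x | ∀ i ∈ S ∩ B, x i = η i} ∩ {x | ∀ i ∉ B, x i = τ' i})| ≤ ε) :
    |cprEv μ {x | x v = a} {x | ∀ i ∈ S, x i = η i} -
      cprEv μ {x | x v = a} {x | ∀ i ∈ S ∩ B, x i = η i}| ≤ ε := by
  set G : Set (V → A) := {x | ∀ i ∈ S, x i = η i}
  set F : Set (V → A) := {x | ∀ i ∈ S ∩ B, x i = η i}
  have hGF : G ⊆ F := fun x hx i hi => hx i (Finset.mem_inter.1 hi).1
  have hF : 0 < prEv μ F := hS.trans_le (prEv_mono hpos hGF)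
  have hcell_pos : ∀ x ∈ F, 0 < μ x → 0 < cprEv μ {y | ∀ i ∉ B, y i = x i} F := fun x hx hμx =>
    div_pos (hμx.trans_le (le_prEv_of_mem hpos ⟨fun _ _ => rfl, hx⟩)) hF
  rw [cprEv_eq_centerMass hpos (equivalence_forall_notMem_eq B),
    cprEv_eq_centerMass hpos (equivalence_forall_notMem_eq B)]
  have hnonneg : ∀ D : Set (V → A), ∀ x ∈ Finset.univ, 0 ≤ D.indicator μ x :=
    fun D x _ => Set.indicator_nonneg (fun y _ => hpos y) x
  refine Finset.abs_centerMass_sub_centerMass_le (hnonneg G) (hnonneg F)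
    (prEv_eq_sum_indicator G ▸ hS) (prEv_eq_sum_indicator F ▸ hF) fun x _ y _ hμx hμy => ?_
  have hxG : x ∈ G := Set.mem_of_indicator_ne_zero hμx.ne'
  have hyF : y ∈ F := Set.mem_of_indicator_ne_zero hμy.ne'
  rw [Set.indicator_of_mem hxG] at hμx
  rw [Set.indicator_of_mem hyF] at hμy
  rw [setOf_forall_mem_eq_inter_cell hxG]
  exact hyp x y (hcell_pos x (hGF hxG) hμx) (hcell_pos y hyF hμy)

/-- if the conditional probability of `σ_v = a` given
`σ_{S₁} = η_{S₁}` together with any admissible configuration on `B^c` varies by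
at most `ε` as the configuration on `B^c` varies, then conditioning on all of
`σ_S = η_S` and conditioning only on `σ_{S₁} = η_{S₁}` give probabilities for
`σ_v = a` within `ε` of each other. -/
theorem conditioning_localization {A V : Type*} [Fintype A] [Nonempty A]
    [Fintype V] (μ : (V → A) → ℝ) (hpos : ∀ x, 0 ≤ μ x) (hsum : ∑ x, μ x = 1)
    (v : V) (B : Finset V) (hvB : v ∈ B) (S : Finset V) (hvS : v ∉ S)
    (a : A) (η : V → A) (ε : ℝ) (hε : 0 ≤ ε)
    (hS : 0 < prEv μ {x | ∀ i ∈ S, x i = η i})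
    (hyp : ∀ τ τ' : V → A,
      0 < cprEv μ {x | ∀ i ∉ B, x i = τ i} {x | ∀ i ∈ S ∩ B, x i = η i} →
      0 < cprEv μ {x | ∀ i ∉ B, x i = τ' i} {x | ∀ i ∈ S ∩ B, x i = η i} →
      |cprEv μ {x | x v = a}
          ({x | ∀ i ∈ S ∩ B, x i = η i} ∩ {x | ∀ i ∉ B, x i = τ i}) -
        cprEv μ {x | x v = a}
          ({x | ∀ i ∈ S ∩ B, x i = η i} ∩ {x | ∀ i ∉ B, x i = τ' i})| ≤ ε) :
    |cprEv μ {x | x v = a} {x | ∀ i ∈ S, x i = η i} -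
      cprEv μ {x | x v = a} {x | ∀ i ∈ S ∩ B, x i = η i}| ≤ ε :=
  conditioning_localization_general μ hpos v B S a η ε hS hyp
end
end

section
/- Dobrushin-type contraction for the Potts model on T_d: let A = {0,...,q}, μ the Gibbs specification for the Potts interaction Φ(σ_e) = β·1{σ_u = σ_v} on edges plus arbitrary finite self-interactions Ψ on vertices, and define the Dobrushin coefficients ρ_{i,j} as half the sup of total variation distances between single-site conditional distributions at v_j given configurations differing only at v_i. If α := sup_j Σ_{i≠j} ρ_{i,j} < 1, then for every r ≥ 1, a ∈ A, and all boundary conditions η, ξ on T_d(r)^c: |μ_{Φ+Ψ, T_d(r), η}(σ_φ = a) − μ_{Φ+Ψ, T_d(r), ξ}(σ_φ = a)| ≤ α^{r−1}. -/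
open scoped Classical BigOperators

noncomputable section

variable {Γ : Type*}

/-- Single-site conditional distribution of the Potts model (with inverse
temperature `β` and self-interactions `Ψ`) at the vertex `v`, given the
configuration `η` on the rest of the (locally finite) graph with neighbour
map `nbr`. -/
def pottsSiteP (q : ℕ) (β : ℝ) (Ψ : Γ → Fin (q+1) → ℝ) (nbr : Γ → Finset Γ)
    (v : Γ) (η : Γ → Fin (q+1)) (a : Fin (q+1)) : ℝ :=
  Real.exp (β * ∑ u ∈ nbr v, (if η u = a then (1:ℝ) else 0) + Ψ v a) /
    ∑ a' : Fin (q+1),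
      Real.exp (β * ∑ u ∈ nbr v, (if η u = a' then (1:ℝ) else 0) + Ψ v a')

/-- Dobrushin influence coefficient `ρ_{i,j}`: half the supremum of the total
variation distances between the single-site conditional distributions at `j`
over pairs of configurations differing only at `i`. -/
def pottsRho (q : ℕ) (β : ℝ) (Ψ : Γ → Fin (q+1) → ℝ) (nbr : Γ → Finset Γ)
    (i j : Γ) : ℝ :=
  (1/2) * sSup {t : ℝ | ∃ η η' : Γ → Fin (q+1), (∀ w, w ≠ i → η w = η' w) ∧
    t = ∑ a, |pottsSiteP q β Ψ nbr j η a - pottsSiteP q β Ψ nbr j η' a|}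

/-- Finite-volume Potts Gibbs weight on the ball `Br` with boundary condition
`η` (interior edges counted once via the factor `1/2`, boundary edges once). -/
def pottsBallWeight (q : ℕ) (β : ℝ) (Ψ : Γ → Fin (q+1) → ℝ)
    (nbr : Γ → Finset Γ) (Br : Finset Γ) (η : Γ → Fin (q+1))
    (ξ : {v // v ∈ Br} → Fin (q+1)) : ℝ :=
  let c : Γ → Fin (q+1) := fun w => if h : w ∈ Br then ξ ⟨w, h⟩ else η w
  Real.exp (β * ∑ v ∈ Br.attach, ∑ u ∈ nbr (v : Γ),
      (if u ∈ Br then (1/2 : ℝ) else 1) * (if c u = c (v : Γ) then 1 else 0)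
    + ∑ v ∈ Br.attach, Ψ (v : Γ) (c (v : Γ)))

/-- `μ_{Φ+Ψ, T_d(r), η}(σ_φ = a)` for the Potts model on the ball `Br`. -/
def pottsBallProb (q : ℕ) (β : ℝ) (Ψ : Γ → Fin (q+1) → ℝ)
    (nbr : Γ → Finset Γ) (Br : Finset Γ) (φ : Γ) (hφ : φ ∈ Br)
    (η : Γ → Fin (q+1)) (a : Fin (q+1)) : ℝ :=
  (∑ ξ ∈ Finset.univ.filter
      (fun ξ : {v // v ∈ Br} → Fin (q+1) => ξ ⟨φ, hφ⟩ = a),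
      pottsBallWeight q β Ψ nbr Br η ξ) /
  ∑ ξ : {v // v ∈ Br} → Fin (q+1), pottsBallWeight q β Ψ nbr Br η ξ

/-!
Resampling the spin at `v` from its conditional law preserves every finite-volume Gibbs measure
whose volume contains `v` (detailed balance), and Dobrushin's single-site estimate controls the
oscillation of the resampled function: the oscillation at `v` disappears and at most the fraction
`ρ i v` of it moves to each other site `i`. Start from the indicator of `σ φ = a`, whose
oscillation sits at `φ`, and resample successively every site of `B 0`, `B 1`, …, `B (r - 1)`.
Weighting oscillation at sites not yet resampled in the current sweep by `α`, and elsewhere by `1`,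
gives a potential that no resampling increases, so each sweep multiplies the total oscillation on
`B r` by `α` while spreading it by at most one layer. The final function has the same expectation as
the indicator under every boundary condition, depends only on the spins in `B r`, and has total
oscillation at most `α ^ r` there, which bounds the difference of its two expectations.
-/

open Finset Function

theorem abs_sum_sub_mul_le_of_sum_eq {ι : Type*} [Fintype ι] [Nonempty ι] {p p' h : ι → ℝ}
    {D : ℝ} (hpp' : ∑ b, p b = ∑ b, p' b) (hh : ∀ b b', |h b - h b'| ≤ D) :
    |∑ b, (p b - p' b) * h b| ≤ (∑ b, |p b - p' b|) / 2 * D := by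
  -- Centre `h` at the midpoint of its range, which is at distance `≤ D / 2` from every value.
  obtain ⟨bM, -, hM⟩ := exists_mem_eq_sup' univ_nonempty h
  obtain ⟨bm, -, hm⟩ := exists_mem_eq_inf' univ_nonempty h
  have hc : ∀ b, |h b - (h bM + h bm) / 2| ≤ D / 2 := fun b => by
    have hb₁ := le_sup' h (mem_univ b)
    have hb₂ := inf'_le h (mem_univ b)
    have hD := (le_abs_self _).trans (hh bM bm)
    rw [hM] at hb₁; rw [hm] at hb₂
    rw [abs_le]; constructor <;> linarith
  have hcentre : ∑ b, (p b - p' b) * h b = ∑ b, (p b - p' b) * (h b - (h bM + h bm) / 2) := by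
    simp only [mul_sub, sum_sub_distrib, ← sum_mul, hpp', sub_self, zero_mul, sub_zero]
  calc |∑ b, (p b - p' b) * h b| ≤ ∑ b, |p b - p' b| * (D / 2) := by
        rw [hcentre]
        refine (abs_sum_le_sum_abs _ _).trans (sum_le_sum fun b _ => ?_)
        rw [abs_mul]
        exact mul_le_mul_of_nonneg_left (hc b) (abs_nonneg _)
    _ = (∑ b, |p b - p' b|) / 2 * D := by rw [← sum_mul]; ring

theorem sum_abs_sub_le_two {ι : Type*} [Fintype ι] {ν ν' : ι → ℝ} (hν : ∀ i, 0 ≤ ν i)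
    (hν' : ∀ i, 0 ≤ ν' i) (h₁ : ∑ i, ν i = 1) (h₁' : ∑ i, ν' i = 1) :
    ∑ i, |ν i - ν' i| ≤ 2 :=
  calc _ ≤ ∑ i, (ν i + ν' i) := sum_le_sum fun i _ => (abs_sub _ _).trans_eq <| by
          rw [abs_of_nonneg (hν i), abs_of_nonneg (hν' i)]
    _ = 2 := by rw [sum_add_distrib, h₁, h₁']; norm_num

theorem abs_sum_mul_sub_sum_mul_le {ι : Type*} [Fintype ι] [Nonempty ι] {ν ν' G : ι → ℝ} {M : ℝ}
    (hν : ∀ i, 0 ≤ ν i) (hν' : ∀ i, 0 ≤ ν' i) (h₁ : ∑ i, ν i = 1) (h₁' : ∑ i, ν' i = 1)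
    (hG : ∀ i j, |G i - G j| ≤ M) :
    |∑ i, ν i * G i - ∑ i, ν' i * G i| ≤ M := by
  have hM : 0 ≤ M := (abs_nonneg _).trans (hG (Classical.arbitrary ι) (Classical.arbitrary ι))
  rw [← sum_sub_distrib]
  simp_rw [← sub_mul]
  calc _ ≤ (∑ i, |ν i - ν' i|) / 2 * M := abs_sum_sub_mul_le_of_sum_eq (by rw [h₁, h₁']) hG
    _ ≤ 2 / 2 * M := by gcongr; exact sum_abs_sub_le_two hν hν' h₁ h₁'
    _ = M := by ring

section Resampling

variable {A : Type*}

def OscBound (g : (Γ → A) → ℝ) (d : Γ → ℝ) : Prop :=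
  ∀ σ i b, |g (update σ i b) - g σ| ≤ d i

theorem OscBound.nonneg {g : (Γ → A) → ℝ} {d : Γ → ℝ} (hg : OscBound g d) (σ : Γ → A)
    (i : Γ) : 0 ≤ d i := by
  simpa using hg σ i (σ i)

theorem OscBound.abs_sub_le_sum {g : (Γ → A) → ℝ} {d : Γ → ℝ} (hg : OscBound g d)
    (S : Finset Γ) {σ σ' : Γ → A} (h : ∀ x ∉ S, σ x = σ' x) :
    |g σ - g σ'| ≤ ∑ i ∈ S, d i := by
  induction S using Finset.induction_on generalizing σ with
  | empty =>
    obtain rfl : σ = σ' := funext fun x => h x (notMem_empty x)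
    simp
  | @insert i S hi ih =>
    have hσ : ∀ x ∉ S, update σ i (σ' i) x = σ' x := fun x hx => by
      by_cases hxi : x = i
      · subst hxi; simp
      · rw [update_of_ne hxi]; exact h x (by simp [hxi, hx])
    rw [sum_insert hi]
    calc |g σ - g σ'|
        ≤ |g σ - g (update σ i (σ' i))| + |g (update σ i (σ' i)) - g σ'| := abs_sub_le _ _ _
      _ ≤ d i + ∑ x ∈ S, d x := add_le_add (abs_sub_comm (g σ) _ ▸ hg σ i (σ' i)) (ih hσ)

def resample [Fintype A] (p : Γ → (Γ → A) → A → ℝ) (v : Γ) (g : (Γ → A) → ℝ) : (Γ → A) → ℝ :=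
  fun σ => ∑ b, p v σ b * g (update σ v b)

def sweep [Fintype A] (p : Γ → (Γ → A) → A → ℝ) (L : List Γ) (g : (Γ → A) → ℝ) : (Γ → A) → ℝ :=
  L.foldl (fun g v => resample p v g) g

theorem DependsOn.resample [Fintype A] {p : Γ → (Γ → A) → A → ℝ} {v : Γ} {g : (Γ → A) → ℝ}
    {E : Set Γ} (hg : DependsOn g E) (hp : DependsOn (p v) E) :
    DependsOn (resample p v g) E := by
  intro σ σ' h
  simp only [_root_.resample, hp h]
  refine sum_congr rfl fun b _ => congrArg _ (hg fun x hx => ?_)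
  by_cases hxv : x = v
  · subst hxv; simp
  · simp [update_of_ne hxv, h x hx]

theorem DependsOn.sweep [Fintype A] {p : Γ → (Γ → A) → A → ℝ} {L : List Γ} {g : (Γ → A) → ℝ}
    {E : Set Γ} (hg : DependsOn g E) (hp : ∀ v ∈ L, DependsOn (p v) E) :
    DependsOn (sweep p L g) E := by
  induction L generalizing g with
  | nil => exact hg
  | cons v L ih =>
    exact ih (hg.resample (hp v List.mem_cons_self)) fun w hw => hp w (List.mem_cons_of_mem v hw)

def ballSweep [Fintype A] (p : Γ → (Γ → A) → A → ℝ) (B : ℕ → Finset Γ) :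
    ℕ → ((Γ → A) → ℝ) → (Γ → A) → ℝ
  | 0, g => g
  | k + 1, g => sweep p (B k).toList (ballSweep p B k g)

theorem DependsOn.ballSweep [Fintype A] {p : Γ → (Γ → A) → A → ℝ} {B : ℕ → Finset Γ}
    {g : (Γ → A) → ℝ} {E : Set Γ} (hg : DependsOn g E) {k : ℕ}
    (hp : ∀ j < k, ∀ v ∈ B j, DependsOn (p v) E) : DependsOn (ballSweep p B k g) E := by
  induction k with
  | zero => exact hg
  | succ k ih =>
    exact (ih fun j hj => hp j (by omega)).sweep fun v hv => hp k k.lt_succ_self v (mem_toList.1 hv)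

theorem oscBound_ite_eq [DecidableEq A] (φ : Γ) (a : A) :
    OscBound (fun σ : Γ → A => if σ φ = a then (1 : ℝ) else 0)
      (fun i => if i = φ then 1 else 0) := by
  intro σ i b
  by_cases hi : i = φ
  · subst hi
    by_cases h₁ : b = a <;> by_cases h₂ : σ i = a <;> simp [h₁, h₂]
  · simp [hi, update_of_ne (Ne.symm hi)]

/-- Resampling at `v` removes the oscillation at `v` and passes the fraction `ρ i v` of it to `i`.
-/
def transfer (ρ : Γ → Γ → ℝ) (d : Γ → ℝ) (v : Γ) : Γ → ℝ :=
  fun i => if i = v then 0 else d i + ρ i v * d v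

theorem OscBound.resample [Fintype A] [Nonempty A] {p : Γ → (Γ → A) → A → ℝ}
    {ρ : Γ → Γ → ℝ} {g : (Γ → A) → ℝ} {d : Γ → ℝ} {v : Γ}
    (hp₀ : ∀ σ b, 0 ≤ p v σ b) (hp₁ : ∀ σ, ∑ b, p v σ b = 1)
    (hpv : ∀ σ b, p v (update σ v b) = p v σ)
    (hρ : ∀ i σ σ', (∀ w, w ≠ i → σ w = σ' w) → ∑ b, |p v σ b - p v σ' b| ≤ 2 * ρ i v)
    (hg : OscBound g d) : OscBound (resample p v g) (transfer ρ d v) := by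
  intro σ i c
  by_cases hiv : i = v
  · subst hiv
    simp [transfer, _root_.resample, hpv]
  set σ' := update σ i c
  have hmove : ∀ b, |g (update σ' v b) - g (update σ v b)| ≤ d i := fun b => by
    rw [update_comm hiv]; exact hg _ i c
  have hspread : ∀ b b', |g (update σ v b) - g (update σ v b')| ≤ d v := fun b b' => by
    simpa using hg (update σ v b') v b
  have hsplit : _root_.resample p v g σ' - _root_.resample p v g σ =
      ∑ b, p v σ' b * (g (update σ' v b) - g (update σ v b)) +
        ∑ b, (p v σ' b - p v σ b) * g (update σ v b) := by
    simp only [_root_.resample, ← sum_add_distrib, ← sum_sub_distrib]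
    exact sum_congr rfl fun b _ => by ring
  have hfirst : |∑ b, p v σ' b * (g (update σ' v b) - g (update σ v b))| ≤ d i :=
    calc _ ≤ ∑ b, p v σ' b * d i := (abs_sum_le_sum_abs _ _).trans <| sum_le_sum fun b _ => by
            rw [abs_mul, abs_of_nonneg (hp₀ σ' b)]
            exact mul_le_mul_of_nonneg_left (hmove b) (hp₀ σ' b)
      _ = d i := by rw [← sum_mul, hp₁, one_mul]
  have hsecond : |∑ b, (p v σ' b - p v σ b) * g (update σ v b)| ≤ ρ i v * d v :=
    calc _ ≤ (∑ b, |p v σ' b - p v σ b|) / 2 * d v :=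
          abs_sum_sub_mul_le_of_sum_eq (by rw [hp₁, hp₁]) hspread
      _ ≤ (2 * ρ i v) / 2 * d v := by
          gcongr
          · exact hg.nonneg σ v
          · exact hρ i σ' σ fun w hw => update_of_ne hw _ _
      _ = ρ i v * d v := by ring
  rw [hsplit]
  simpa [transfer, hiv] using (abs_add_le _ _).trans (add_le_add hfirst hsecond)

theorem OscBound.sweep [Fintype A] [Nonempty A] {p : Γ → (Γ → A) → A → ℝ}
    {ρ : Γ → Γ → ℝ} {g : (Γ → A) → ℝ} {d : Γ → ℝ} (L : List Γ)
    (hp₀ : ∀ v σ b, 0 ≤ p v σ b) (hp₁ : ∀ v σ, ∑ b, p v σ b = 1)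
    (hpv : ∀ v σ b, p v (update σ v b) = p v σ)
    (hρ : ∀ i v σ σ', (∀ w, w ≠ i → σ w = σ' w) → ∑ b, |p v σ b - p v σ' b| ≤ 2 * ρ i v)
    (hg : OscBound g d) : OscBound (sweep p L g) (L.foldl (transfer ρ) d) := by
  induction L generalizing g d with
  | nil => exact hg
  | cons v L ih =>
    exact ih (hg.resample (hp₀ v) (hp₁ v) (hpv v) fun i => hρ i v)

end Resampling

section Potential

variable {ρ : Γ → Γ → ℝ} {α : ℝ} {U : Finset Γ}

/-- Oscillation at a site still to be resampled is worth `α`, elsewhere it is worth `1`. -/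
def sweepPotential (α : ℝ) (U R : Finset Γ) (d : Γ → ℝ) : ℝ :=
  ∑ i ∈ U, (if i ∈ R then α else 1) * d i

theorem transfer_nonneg (hρ : ∀ i v, 0 ≤ ρ i v) {d : Γ → ℝ} (hd : ∀ i, 0 ≤ d i) (v i : Γ) :
    0 ≤ transfer ρ d v i := by
  unfold transfer
  split_ifs
  · exact le_rfl
  · exact add_nonneg (hd i) (mul_nonneg (hρ i v) (hd v))

theorem sweepPotential_transfer_le {v : Γ} (hρ : ∀ i, 0 ≤ ρ i v) (hα : α ≤ 1) (hv : v ∈ U)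
    (hsum : ∑ i ∈ U.erase v, ρ i v ≤ α) (R : Finset Γ) {d : Γ → ℝ} (hd : 0 ≤ d v) :
    sweepPotential α U (R.erase v) (transfer ρ d v) ≤ sweepPotential α U R d := by
  set w : Γ → ℝ := fun i => if i ∈ R then α else 1
  have hw : ∀ i, w i ≤ 1 := fun i => by by_cases hi : i ∈ R <;> simp [w, hi, hα]
  have hgain : ∑ i ∈ U.erase v, w i * ρ i v ≤ w v :=
    calc _ ≤ ∑ i ∈ U.erase v, ρ i v :=
          sum_le_sum fun i _ => mul_le_of_le_one_left (hρ i) (hw i)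
      _ ≤ w v := hsum.trans (by by_cases hvR : v ∈ R <;> simp [w, hvR, hα])
  calc sweepPotential α U (R.erase v) (transfer ρ d v)
      = ∑ i ∈ U.erase v, w i * (d i + ρ i v * d v) := by
        rw [sweepPotential, ← add_sum_erase _ _ hv]
        simp only [transfer, if_true, mul_zero, zero_add]
        refine sum_congr rfl fun i hi => ?_
        have hiv := ne_of_mem_erase hi
        simp [w, hiv]
    _ = ∑ i ∈ U.erase v, w i * d i + (∑ i ∈ U.erase v, w i * ρ i v) * d v := by
        rw [sum_mul, ← sum_add_distrib]
        exact sum_congr rfl fun i _ => by ring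
    _ ≤ ∑ i ∈ U.erase v, w i * d i + w v * d v := by gcongr
    _ = sweepPotential α U R d := by rw [sweepPotential, ← add_sum_erase _ _ hv, add_comm]

theorem sweepPotential_foldl_transfer_le (hρ : ∀ i v, 0 ≤ ρ i v) (hα : α ≤ 1) {L : List Γ}
    (hLU : ∀ v ∈ L, v ∈ U) (hsum : ∀ v ∈ L, ∑ i ∈ U.erase v, ρ i v ≤ α) (R : Finset Γ)
    {d : Γ → ℝ} (hd : ∀ i, 0 ≤ d i) :
    sweepPotential α U (R \ L.toFinset) (L.foldl (transfer ρ) d) ≤ sweepPotential α U R d := by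
  induction L generalizing R d with
  | nil => simp
  | cons v L ih =>
    have hmem : v ∈ v :: L := List.mem_cons_self
    calc sweepPotential α U (R \ (v :: L).toFinset) ((v :: L).foldl (transfer ρ) d)
        = sweepPotential α U (R.erase v \ L.toFinset) (L.foldl (transfer ρ) (transfer ρ d v)) := by
          rw [List.toFinset_cons, sdiff_insert, erase_sdiff_comm, List.foldl_cons]
      _ ≤ sweepPotential α U (R.erase v) (transfer ρ d v) :=
          ih (fun w hw => hLU w (List.mem_cons_of_mem v hw))
            (fun w hw => hsum w (List.mem_cons_of_mem v hw)) _ (transfer_nonneg hρ hd v)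
      _ ≤ sweepPotential α U R d :=
          sweepPotential_transfer_le (hρ · v) hα (hLU v hmem) (hsum v hmem) R (hd v)

theorem sum_foldl_transfer_le (hρ : ∀ i v, 0 ≤ ρ i v) (hα : α ≤ 1) {L : List Γ}
    (hLU : ∀ v ∈ L, v ∈ U) (hsum : ∀ v ∈ L, ∑ i ∈ U.erase v, ρ i v ≤ α) {d : Γ → ℝ}
    (hd : ∀ i, 0 ≤ d i) (hdL : ∀ i ∉ L, d i = 0) :
    ∑ i ∈ U, L.foldl (transfer ρ) d i ≤ α * ∑ i ∈ U, d i := by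
  have h := sweepPotential_foldl_transfer_le hρ hα hLU hsum L.toFinset hd
  rw [sdiff_self] at h
  calc ∑ i ∈ U, L.foldl (transfer ρ) d i = sweepPotential α U ∅ (L.foldl (transfer ρ) d) := by
        simp [sweepPotential]
    _ ≤ sweepPotential α U L.toFinset d := h
    _ = α * ∑ i ∈ U, d i := by
        rw [sweepPotential, mul_sum]
        refine sum_congr rfl fun i _ => ?_
        by_cases hi : i ∈ L <;> simp [hi, hdL]

theorem foldl_transfer_eq_zero {E : Set Γ} {L : List Γ} (hE : ∀ v ∈ L, ∀ i ∉ E, ρ i v = 0)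
    {d : Γ → ℝ} (hd : ∀ i ∉ E, d i = 0) : ∀ i ∉ E, L.foldl (transfer ρ) d i = 0 := by
  induction L generalizing d with
  | nil => exact hd
  | cons v L ih =>
    refine ih (fun w hw => hE w (List.mem_cons_of_mem v hw)) fun i hi => ?_
    simp [transfer, hd i hi, hE v List.mem_cons_self i hi]

end Potential

section Glue

variable {A : Type*}

def glue (Br : Finset Γ) (ζ : Br → A) (η : Γ → A) : Γ → A :=
  fun w => if h : w ∈ Br then ζ ⟨w, h⟩ else η w

theorem glue_of_mem {Br : Finset Γ} (ζ : Br → A) (η : Γ → A) {v : Γ} (hv : v ∈ Br) :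
    glue Br ζ η v = ζ ⟨v, hv⟩ :=
  dif_pos hv

theorem glue_of_notMem {Br : Finset Γ} (ζ : Br → A) (η : Γ → A) {v : Γ} (hv : v ∉ Br) :
    glue Br ζ η v = η v :=
  dif_neg hv

theorem glue_update {Br : Finset Γ} (ζ : Br → A) (η : Γ → A) {v : Γ} (hv : v ∈ Br) (b : A) :
    glue Br (update ζ ⟨v, hv⟩ b) η = update (glue Br ζ η) v b := by
  funext w
  by_cases hw : w = v
  · subst hw; simp [glue_of_mem _ _ hv]
  · by_cases hwB : w ∈ Br
    · rw [update_of_ne hw, glue_of_mem _ _ hwB, glue_of_mem _ _ hwB,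
        update_of_ne fun h => hw (congrArg Subtype.val h)]
    · rw [update_of_ne hw, glue_of_notMem _ _ hwB, glue_of_notMem _ _ hwB]

end Glue

section Potts

open Real

variable {q : ℕ} {β : ℝ} {Ψ : Γ → Fin (q+1) → ℝ} {nbr : Γ → Finset Γ}

def pottsLocalEnergy (β : ℝ) (Ψ : Γ → Fin (q+1) → ℝ) (nbr : Γ → Finset Γ) (v : Γ)
    (σ : Γ → Fin (q+1)) (b : Fin (q+1)) : ℝ :=
  β * ∑ u ∈ nbr v, (if σ u = b then (1:ℝ) else 0) + Ψ v b

theorem pottsSiteP_eq (v : Γ) (σ : Γ → Fin (q+1)) (b : Fin (q+1)) :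
    pottsSiteP q β Ψ nbr v σ b =
      exp (pottsLocalEnergy β Ψ nbr v σ b) / ∑ b', exp (pottsLocalEnergy β Ψ nbr v σ b') :=
  rfl

theorem pottsSiteP_nonneg (v : Γ) (σ : Γ → Fin (q+1)) (b : Fin (q+1)) :
    0 ≤ pottsSiteP q β Ψ nbr v σ b := by
  rw [pottsSiteP_eq]; positivity

theorem sum_pottsSiteP (v : Γ) (σ : Γ → Fin (q+1)) : ∑ b, pottsSiteP q β Ψ nbr v σ b = 1 := by
  simp only [pottsSiteP_eq, ← sum_div]
  exact div_self (by positivity)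

theorem dependsOn_pottsSiteP (v : Γ) : DependsOn (pottsSiteP q β Ψ nbr v) (nbr v : Set Γ) := by
  intro σ σ' h
  have hF : pottsLocalEnergy β Ψ nbr v σ = pottsLocalEnergy β Ψ nbr v σ' := by
    funext b
    simp only [pottsLocalEnergy]
    congr 2
    exact sum_congr rfl fun u hu => by rw [h u hu]
  funext b
  rw [pottsSiteP_eq, pottsSiteP_eq, hF]

theorem pottsSiteP_update_self {v : Γ} (hv : v ∉ nbr v) (σ : Γ → Fin (q+1)) (b : Fin (q+1)) :
    pottsSiteP q β Ψ nbr v (update σ v b) = pottsSiteP q β Ψ nbr v σ :=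
  dependsOn_pottsSiteP v fun _ hu => update_of_ne (ne_of_mem_of_not_mem hu hv) _ _

theorem bddAbove_pottsRho_set (i j : Γ) :
    BddAbove {t : ℝ | ∃ η η' : Γ → Fin (q+1), (∀ w, w ≠ i → η w = η' w) ∧
      t = ∑ a, |pottsSiteP q β Ψ nbr j η a - pottsSiteP q β Ψ nbr j η' a|} :=
  ⟨2, by
    rintro _ ⟨η, η', -, rfl⟩
    exact sum_abs_sub_le_two (pottsSiteP_nonneg j η) (pottsSiteP_nonneg j η')
      (sum_pottsSiteP j η) (sum_pottsSiteP j η')⟩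

theorem sum_abs_pottsSiteP_sub_le_pottsRho {i j : Γ} {σ σ' : Γ → Fin (q+1)}
    (h : ∀ w, w ≠ i → σ w = σ' w) :
    ∑ b, |pottsSiteP q β Ψ nbr j σ b - pottsSiteP q β Ψ nbr j σ' b|
      ≤ 2 * pottsRho q β Ψ nbr i j := by
  have := le_csSup (bddAbove_pottsRho_set (β := β) (Ψ := Ψ) (nbr := nbr) i j) ⟨σ, σ', h, rfl⟩
  rw [pottsRho]; linarith

theorem pottsRho_nonneg (i j : Γ) : 0 ≤ pottsRho q β Ψ nbr i j := by
  have := sum_abs_pottsSiteP_sub_le_pottsRho (β := β) (Ψ := Ψ) (nbr := nbr) (i := i) (j := j)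
    (σ := 0) (σ' := 0) fun _ _ => rfl
  simp only [sub_self, abs_zero, sum_const_zero] at this
  linarith

theorem pottsRho_eq_zero {i j : Γ} (hij : i ∉ nbr j) : pottsRho q β Ψ nbr i j = 0 := by
  have hset : {t : ℝ | ∃ η η' : Γ → Fin (q+1), (∀ w, w ≠ i → η w = η' w) ∧
      t = ∑ a, |pottsSiteP q β Ψ nbr j η a - pottsSiteP q β Ψ nbr j η' a|} = {0} := by
    ext t
    constructor
    · rintro ⟨η, η', h, rfl⟩
      rw [dependsOn_pottsSiteP j fun u hu => h u (ne_of_mem_of_not_mem hu hij)]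
      simp
    · rintro rfl
      exact ⟨0, 0, fun _ _ => rfl, by simp⟩
  rw [pottsRho, hset, csSup_singleton, mul_zero]

def pottsBallEnergy (β : ℝ) (Ψ : Γ → Fin (q+1) → ℝ) (nbr : Γ → Finset Γ) (Br : Finset Γ)
    (c : Γ → Fin (q+1)) : ℝ :=
  β * ∑ w ∈ Br, ∑ u ∈ nbr w, (if u ∈ Br then (1/2 : ℝ) else 1) * (if c u = c w then 1 else 0)
    + ∑ w ∈ Br, Ψ w (c w)

theorem pottsBallWeight_eq_exp (Br : Finset Γ) (η : Γ → Fin (q+1)) (ζ : Br → Fin (q+1)) :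
    pottsBallWeight q β Ψ nbr Br η ζ = exp (pottsBallEnergy β Ψ nbr Br (glue Br ζ η)) := by
  rw [pottsBallWeight, pottsBallEnergy, ← sum_attach Br, ← sum_attach Br]
  rfl

/-- Every edge at `v` is counted once in total: with weight `1` from `v` if it leaves `Br`, with
weight `1/2` from each endpoint otherwise. -/
theorem sum_ballBonds_update (hsym : ∀ u v : Γ, u ∈ nbr v ↔ v ∈ nbr u) (hirr : ∀ v : Γ, v ∉ nbr v)
    {Br : Finset Γ} {v : Γ} (hv : v ∈ Br) (c : Γ → Fin (q+1)) (b : Fin (q+1)) :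
    ∑ w ∈ Br, ∑ u ∈ nbr w,
        (if u ∈ Br then (1/2 : ℝ) else 1) * (if update c v b u = update c v b w then 1 else 0)
      = ∑ u ∈ nbr v, (if c u = b then (1:ℝ) else 0)
        + ∑ w ∈ Br.erase v, ∑ u ∈ (nbr w).erase v,
            (if u ∈ Br then (1/2 : ℝ) else 1) * (if c u = c w then 1 else 0) := by
  have hat : ∑ u ∈ nbr v,
        (if u ∈ Br then (1/2 : ℝ) else 1) * (if update c v b u = update c v b v then 1 else 0)
      = ∑ u ∈ nbr v, (if u ∈ Br then (1/2 : ℝ) else 1) * (if c u = b then 1 else 0) :=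
    sum_congr rfl fun u hu => by rw [update_self, update_of_ne (ne_of_mem_of_not_mem hu (hirr v))]
  have haway : ∀ w ∈ Br.erase v, ∑ u ∈ nbr w,
        (if u ∈ Br then (1/2 : ℝ) else 1) * (if update c v b u = update c v b w then 1 else 0)
      = (if w ∈ nbr v then (1/2 : ℝ) * (if c w = b then 1 else 0) else 0)
        + ∑ u ∈ (nbr w).erase v,
            (if u ∈ Br then (1/2 : ℝ) else 1) * (if c u = c w then 1 else 0) := by
    intro w hw
    have hwv := ne_of_mem_erase hw
    have hrest : ∑ u ∈ (nbr w).erase v,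
          (if u ∈ Br then (1/2 : ℝ) else 1) * (if update c v b u = update c v b w then 1 else 0)
        = ∑ u ∈ (nbr w).erase v,
            (if u ∈ Br then (1/2 : ℝ) else 1) * (if c u = c w then 1 else 0) :=
      sum_congr rfl fun u hu => by rw [update_of_ne (ne_of_mem_erase hu), update_of_ne hwv]
    by_cases hvw : v ∈ nbr w
    · rw [← add_sum_erase _ _ hvw, hrest, if_pos hv, update_self, update_of_ne hwv,
        if_pos ((hsym w v).2 hvw)]
      simp only [@eq_comm _ b (c w)]
    · rw [if_neg fun h => hvw ((hsym w v).1 h), zero_add, ← hrest, erase_eq_of_notMem hvw]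
  have hback : ∑ w ∈ Br.erase v, (if w ∈ nbr v then (1/2 : ℝ) * (if c w = b then 1 else 0) else 0)
      = ∑ u ∈ nbr v, (if u ∈ Br then (1/2 : ℝ) * (if c u = b then 1 else 0) else 0) := by
    rw [sum_erase _ (by rw [if_neg (hirr v)]), sum_ite_mem, sum_ite_mem, inter_comm]
  rw [← add_sum_erase _ _ hv, hat, sum_congr rfl haway, sum_add_distrib, hback, ← add_assoc,
    ← sum_add_distrib]
  congr 1
  refine sum_congr rfl fun u _ => ?_
  split_ifs <;> ring

theorem exists_pottsBallEnergy_update_eq (hsym : ∀ u v : Γ, u ∈ nbr v ↔ v ∈ nbr u)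
    (hirr : ∀ v : Γ, v ∉ nbr v) {Br : Finset Γ} {v : Γ} (hv : v ∈ Br) (c : Γ → Fin (q+1)) :
    ∃ K, ∀ b, pottsBallEnergy β Ψ nbr Br (update c v b) = pottsLocalEnergy β Ψ nbr v c b + K := by
  refine ⟨β * ∑ w ∈ Br.erase v, ∑ u ∈ (nbr w).erase v,
      (if u ∈ Br then (1/2 : ℝ) else 1) * (if c u = c w then 1 else 0)
    + ∑ w ∈ Br.erase v, Ψ w (c w), fun b => ?_⟩
  have hΨ : ∑ w ∈ Br, Ψ w (update c v b w) = Ψ v b + ∑ w ∈ Br.erase v, Ψ w (c w) := by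
    rw [← add_sum_erase _ _ hv, update_self]
    exact congrArg _ (sum_congr rfl fun w hw => by rw [update_of_ne (ne_of_mem_erase hw)])
  rw [pottsBallEnergy, sum_ballBonds_update hsym hirr hv, hΨ, pottsLocalEnergy]
  ring

/-- Detailed balance of the single-site kernel with respect to the finite-volume Gibbs weights. -/
theorem pottsBallWeight_update_mul_pottsSiteP (hsym : ∀ u v : Γ, u ∈ nbr v ↔ v ∈ nbr u)
    (hirr : ∀ v : Γ, v ∉ nbr v) {Br : Finset Γ} {v : Γ} (hv : v ∈ Br) (η : Γ → Fin (q+1))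
    (ζ : Br → Fin (q+1)) (b : Fin (q+1)) :
    pottsBallWeight q β Ψ nbr Br η (update ζ ⟨v, hv⟩ b)
        * pottsSiteP q β Ψ nbr v (glue Br (update ζ ⟨v, hv⟩ b) η) (ζ ⟨v, hv⟩)
      = pottsBallWeight q β Ψ nbr Br η ζ * pottsSiteP q β Ψ nbr v (glue Br ζ η) b := by
  obtain ⟨K, hK⟩ := exists_pottsBallEnergy_update_eq (β := β) (Ψ := Ψ) hsym hirr hv (glue Br ζ η)
  have hW : ∀ b, pottsBallWeight q β Ψ nbr Br η (update ζ ⟨v, hv⟩ b)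
      = exp (pottsLocalEnergy β Ψ nbr v (glue Br ζ η) b + K) := fun b => by
    rw [pottsBallWeight_eq_exp, glue_update, hK]
  have hW' : pottsBallWeight q β Ψ nbr Br η ζ
      = exp (pottsLocalEnergy β Ψ nbr v (glue Br ζ η) (ζ ⟨v, hv⟩) + K) := by
    simpa using hW (ζ ⟨v, hv⟩)
  rw [hW, hW', glue_update, pottsSiteP_update_self (hirr v), pottsSiteP_eq, pottsSiteP_eq,
    exp_add, exp_add]
  ring

theorem sum_pottsBallWeight_mul_resample (hsym : ∀ u v : Γ, u ∈ nbr v ↔ v ∈ nbr u)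
    (hirr : ∀ v : Γ, v ∉ nbr v) {Br : Finset Γ} {v : Γ} (hv : v ∈ Br) (η : Γ → Fin (q+1))
    (g : (Γ → Fin (q+1)) → ℝ) :
    ∑ ζ, pottsBallWeight q β Ψ nbr Br η ζ * resample (pottsSiteP q β Ψ nbr) v g (glue Br ζ η)
      = ∑ ζ, pottsBallWeight q β Ψ nbr Br η ζ * g (glue Br ζ η) := by
  -- Reindex the pairs `(ζ, b)` by the involution `(ζ, b) ↦ (ζ with b at v, ζ v)`.
  have hswap : ∑ x : (Br → Fin (q+1)) × Fin (q+1), pottsBallWeight q β Ψ nbr Br η x.1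
        * (pottsSiteP q β Ψ nbr v (glue Br x.1 η) x.2 * g (update (glue Br x.1 η) v x.2))
      = ∑ x : (Br → Fin (q+1)) × Fin (q+1), pottsBallWeight q β Ψ nbr Br η x.1
        * pottsSiteP q β Ψ nbr v (glue Br x.1 η) x.2 * g (glue Br x.1 η) := by
    refine Fintype.sum_bijective (fun x => (update x.1 ⟨v, hv⟩ x.2, x.1 ⟨v, hv⟩))
      (Involutive.bijective fun x => ?_) _ _ fun x => ?_
    · simp
    · dsimp only
      rw [pottsBallWeight_update_mul_pottsSiteP hsym hirr hv, glue_update, mul_assoc]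
  simp only [resample, mul_sum, ← Fintype.sum_prod_type'] at hswap ⊢
  rw [hswap, Fintype.sum_prod_type]
  refine sum_congr rfl fun ζ _ => ?_
  dsimp only
  rw [← sum_mul, ← mul_sum, sum_pottsSiteP, mul_one]

def pottsBallExpect (q : ℕ) (β : ℝ) (Ψ : Γ → Fin (q+1) → ℝ) (nbr : Γ → Finset Γ)
    (Br : Finset Γ) (η : Γ → Fin (q+1)) (g : (Γ → Fin (q+1)) → ℝ) : ℝ :=
  (∑ ζ, pottsBallWeight q β Ψ nbr Br η ζ * g (glue Br ζ η)) / ∑ ζ, pottsBallWeight q β Ψ nbr Br η ζ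

theorem pottsBallProb_eq_pottsBallExpect (Br : Finset Γ) {φ : Γ} (hφ : φ ∈ Br)
    (η : Γ → Fin (q+1)) (a : Fin (q+1)) :
    pottsBallProb q β Ψ nbr Br φ hφ η a
      = pottsBallExpect q β Ψ nbr Br η fun σ => if σ φ = a then 1 else 0 := by
  rw [pottsBallProb, pottsBallExpect, sum_filter]
  congr 1
  exact sum_congr rfl fun ζ _ => by rw [glue_of_mem ζ η hφ, mul_ite, mul_one, mul_zero]

theorem pottsBallExpect_sweep (hsym : ∀ u v : Γ, u ∈ nbr v ↔ v ∈ nbr u)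
    (hirr : ∀ v : Γ, v ∉ nbr v) {Br : Finset Γ} {L : List Γ} (hL : ∀ v ∈ L, v ∈ Br)
    (η : Γ → Fin (q+1)) (g : (Γ → Fin (q+1)) → ℝ) :
    pottsBallExpect q β Ψ nbr Br η (sweep (pottsSiteP q β Ψ nbr) L g)
      = pottsBallExpect q β Ψ nbr Br η g := by
  induction L generalizing g with
  | nil => rfl
  | cons v L ih =>
    rw [sweep, List.foldl_cons, ← sweep, ih fun w hw => hL w (List.mem_cons_of_mem v hw),
      pottsBallExpect, pottsBallExpect,
      sum_pottsBallWeight_mul_resample hsym hirr (hL v List.mem_cons_self)]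

theorem pottsBallExpect_ballSweep (hsym : ∀ u v : Γ, u ∈ nbr v ↔ v ∈ nbr u)
    (hirr : ∀ v : Γ, v ∉ nbr v) {B : ℕ → Finset Γ} (hBmono : Monotone B) {r : ℕ}
    (η : Γ → Fin (q+1)) (g : (Γ → Fin (q+1)) → ℝ) :
    ∀ k ≤ r, pottsBallExpect q β Ψ nbr (B r) η (ballSweep (pottsSiteP q β Ψ nbr) B k g)
      = pottsBallExpect q β Ψ nbr (B r) η g := by
  intro k hk
  induction k with
  | zero => rfl
  | succ k ih =>
    rw [ballSweep, pottsBallExpect_sweep hsym hirr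
      (fun v hv => hBmono (by omega : k ≤ r) (mem_toList.1 hv)), ih (by omega)]

theorem abs_pottsBallExpect_sub_le {Br : Finset Γ} {g : (Γ → Fin (q+1)) → ℝ} {d : Γ → ℝ}
    (hg : OscBound g d) (hdep : DependsOn g (Br : Set Γ)) (η ξ : Γ → Fin (q+1)) :
    |pottsBallExpect q β Ψ nbr Br η g - pottsBallExpect q β Ψ nbr Br ξ g| ≤ ∑ i ∈ Br, d i := by
  have hZ : ∀ η, 0 < ∑ ζ, pottsBallWeight q β Ψ nbr Br η ζ := fun η =>
    sum_pos (fun ζ _ => by rw [pottsBallWeight_eq_exp]; positivity) univ_nonempty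
  have hexpect : ∀ η, pottsBallExpect q β Ψ nbr Br η g = ∑ ζ,
      pottsBallWeight q β Ψ nbr Br η ζ / (∑ ζ', pottsBallWeight q β Ψ nbr Br η ζ')
        * g (glue Br ζ ξ) := fun η => by
    rw [pottsBallExpect, sum_div]
    refine sum_congr rfl fun ζ _ => ?_
    rw [@hdep (glue Br ζ η) (glue Br ζ ξ) fun i hi => by
      rw [glue_of_mem _ _ (mem_coe.1 hi), glue_of_mem _ _ (mem_coe.1 hi)]]
    ring
  rw [hexpect, hexpect]
  refine abs_sum_mul_sub_sum_mul_le (fun ζ => ?_) (fun ζ => ?_) ?_ ?_ fun ζ ζ' =>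
    hg.abs_sub_le_sum Br fun i hi => by rw [glue_of_notMem _ _ hi, glue_of_notMem _ _ hi]
  all_goals first
    | exact div_nonneg (by rw [pottsBallWeight_eq_exp]; positivity) (hZ _).le
    | rw [← sum_div, div_self (hZ _).ne']

theorem sum_erase_pottsRho_le {j : Γ} {α : ℝ}
    (hj : ∑' i : Γ, (if i = j then 0 else pottsRho q β Ψ nbr i j) ≤ α) (U : Finset Γ) :
    ∑ i ∈ U.erase j, pottsRho q β Ψ nbr i j ≤ α := by
  have hsummable : Summable fun i => if i = j then 0 else pottsRho q β Ψ nbr i j :=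
    summable_of_ne_finset_zero (s := nbr j) fun i hi => by simp [pottsRho_eq_zero hi]
  calc ∑ i ∈ U.erase j, pottsRho q β Ψ nbr i j
      = ∑ i ∈ U.erase j, (if i = j then 0 else pottsRho q β Ψ nbr i j) :=
        sum_congr rfl fun i hi => (if_neg (ne_of_mem_erase hi)).symm
    _ ≤ ∑' i, (if i = j then 0 else pottsRho q β Ψ nbr i j) :=
        hsummable.sum_le_tsum _ fun i _ => by split_ifs <;> simp [pottsRho_nonneg]
    _ ≤ α := hj

theorem exists_oscBound_ballSweep_pottsSiteP (hirr : ∀ v : Γ, v ∉ nbr v) {B : ℕ → Finset Γ}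
    (hBmono : Monotone B) (hBnbr : ∀ r, ∀ v ∈ B r, ∀ u ∈ nbr v, u ∈ B (r+1)) {α : ℝ}
    (hα₀ : 0 ≤ α) (hα₁ : α ≤ 1)
    (hρα : ∀ v (U : Finset Γ), ∑ i ∈ U.erase v, pottsRho q β Ψ nbr i v ≤ α)
    {g : (Γ → Fin (q+1)) → ℝ} {d : Γ → ℝ} (hg : OscBound g d) (hd : ∀ i ∉ B 0, d i = 0)
    {r : ℕ} : ∀ k ≤ r, ∃ d' : Γ → ℝ, OscBound (ballSweep (pottsSiteP q β Ψ nbr) B k g) d' ∧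
      (∀ i ∉ B k, d' i = 0) ∧ ∑ i ∈ B r, d' i ≤ α ^ k * ∑ i ∈ B r, d i := by
  intro k hk
  induction k with
  | zero => exact ⟨d, hg, hd, by simp⟩
  | succ k ih =>
    obtain ⟨d', hosc, hsupp, hsum⟩ := ih (by omega)
    refine ⟨(B k).toList.foldl (transfer (pottsRho q β Ψ nbr)) d',
      hosc.sweep _ pottsSiteP_nonneg sum_pottsSiteP (fun v => pottsSiteP_update_self (hirr v))
        fun _ _ _ _ h => sum_abs_pottsSiteP_sub_le_pottsRho h, ?_, ?_⟩
    · refine foldl_transfer_eq_zero (fun v hv i hi => pottsRho_eq_zero fun h =>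
        hi (hBnbr k v (mem_toList.1 hv) i h)) fun i hi => hsupp i fun h => hi (hBmono k.le_succ h)
    · calc _ ≤ α * ∑ i ∈ B r, d' i :=
            sum_foldl_transfer_le pottsRho_nonneg hα₁
              (fun v hv => hBmono (by omega : k ≤ r) (mem_toList.1 hv)) (fun v _ => hρα v _)
              (hosc.nonneg 0) fun i hi => hsupp i (by simpa using hi)
        _ ≤ α * (α ^ k * ∑ i ∈ B r, d i) := by gcongr
        _ = α ^ (k + 1) * ∑ i ∈ B r, d i := by ring

end Potts

theorem potts_dobrushin_contraction_general
    (q : ℕ) (β : ℝ) (Ψ : Γ → Fin (q+1) → ℝ)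
    (nbr : Γ → Finset Γ) (hsym : ∀ u v : Γ, u ∈ nbr v ↔ v ∈ nbr u)
    (hirr : ∀ v : Γ, v ∉ nbr v)
    (φ : Γ) (B : ℕ → Finset Γ) (hBmono : Monotone B)
    (hφB : ∀ r, φ ∈ B r)
    (hBnbr : ∀ r, ∀ v ∈ B r, ∀ u ∈ nbr v, u ∈ B (r+1))
    (α : ℝ) (hα : α < 1)
    (hdob : ∀ j : Γ,
      ∑' i : Γ, (if i = j then 0 else pottsRho q β Ψ nbr i j) ≤ α) :
    ∀ r : ℕ, 1 ≤ r → ∀ (a : Fin (q+1)) (η ξ : Γ → Fin (q+1)),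
      |pottsBallProb q β Ψ nbr (B r) φ (hφB r) η a -
        pottsBallProb q β Ψ nbr (B r) φ (hφB r) ξ a| ≤ α ^ (r - 1) := by
  intro r _ a η ξ
  have hρα := fun v => sum_erase_pottsRho_le (hdob v)
  have hα₀ : 0 ≤ α := by simpa using hρα φ ∅
  have hf : DependsOn (fun σ : Γ → Fin (q+1) => if σ φ = a then (1 : ℝ) else 0) (B r : Set Γ) :=
    fun σ σ' h => by simp only [h φ (hφB r)]
  obtain ⟨d, hosc, -, hd⟩ := exists_oscBound_ballSweep_pottsSiteP hirr hBmono hBnbr hα₀ hα.le hρα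
    (oscBound_ite_eq φ a) (fun i hi => if_neg fun (h : i = φ) => hi (h ▸ hφB 0)) r le_rfl
  have hdep := hf.ballSweep (p := pottsSiteP q β Ψ nbr) (B := B) (k := r) fun j hj v hv =>
    (dependsOn_pottsSiteP v).mono fun u hu =>
      hBmono (by omega : j + 1 ≤ r) (hBnbr j v hv u hu)
  rw [pottsBallProb_eq_pottsBallExpect, pottsBallProb_eq_pottsBallExpect,
    ← pottsBallExpect_ballSweep hsym hirr hBmono η _ r le_rfl,
    ← pottsBallExpect_ballSweep hsym hirr hBmono ξ _ r le_rfl]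
  calc _ ≤ ∑ i ∈ B r, d i := abs_pottsBallExpect_sub_le hosc hdep η ξ
    _ ≤ α ^ r := by simpa [sum_ite_eq', hφB r] using hd
    _ ≤ α ^ (r - 1) := pow_le_pow_of_le_one hα₀ hα.le (Nat.sub_le r 1)

/-- Dobrushin-type contraction for the Potts model on the
`d`-regular tree (root `φ`, balls `B r`): if the Dobrushin condition
`α = sup_j Σ_{i ≠ j} ρ_{i,j} < 1` holds, then for every `r ≥ 1`, colour `a`,
and boundary conditions `η, ξ` on `T_d(r)^c`,
`|μ_{Φ+Ψ,T_d(r),η}(σ_φ = a) − μ_{Φ+Ψ,T_d(r),ξ}(σ_φ = a)| ≤ α^{r-1}`. -/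
theorem potts_dobrushin_contraction [Countable Γ]
    (q : ℕ) (β : ℝ) (Ψ : Γ → Fin (q+1) → ℝ)
    (nbr : Γ → Finset Γ) (hsym : ∀ u v : Γ, u ∈ nbr v ↔ v ∈ nbr u)
    (hirr : ∀ v : Γ, v ∉ nbr v)
    (φ : Γ) (B : ℕ → Finset Γ) (hB0 : B 0 = {φ}) (hBmono : Monotone B)
    (hφB : ∀ r, φ ∈ B r)
    (hBnbr : ∀ r, ∀ v ∈ B r, ∀ u ∈ nbr v, u ∈ B (r+1))
    (hBcover : ∀ v : Γ, ∃ r, v ∈ B r)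
    (α : ℝ) (hα : α < 1)
    (hdob : ∀ j : Γ,
      ∑' i : Γ, (if i = j then 0 else pottsRho q β Ψ nbr i j) ≤ α) :
    ∀ r : ℕ, 1 ≤ r → ∀ (a : Fin (q+1)) (η ξ : Γ → Fin (q+1)),
      |pottsBallProb q β Ψ nbr (B r) φ (hφB r) η a -
        pottsBallProb q β Ψ nbr (B r) φ (hφB r) ξ a| ≤ α ^ (r - 1) :=
  potts_dobrushin_contraction_general q β Ψ nbr hsym hirr φ B hBmono hφB hBnbr α hα hdob
end
end
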